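/- Let p be an odd prime, n ≥ 1, f, h : F_{p^n} → F_{p^n}, α ∈ F_{p^n}, and let Tr : F_{p^n} → F_p denote the absolute trace map, with values of F_p viewed inside F_{p^n} via the canonical embedding. Define g(X) = f(X) + α·Tr(h(X)). Then the (classical) differential uniformity of g satisfies Δ_g ≤ p·Δ_f. Moreover, if f(X) = X^{p^n−2} is the inverse function, then Δ_g ≤ 2(p+1). -/

import Mathlib

/-!
Since `Tr` takes values in the prime field, the switching term `α · Tr (h x)` changes under
`x ↦ x + a` by `α t` with `t` among the at most `p` roots of `X ^ p - X`. Hence every solution of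
`g (x + a) - g x = b` solves `f (x + a) - f x = b - α t` for one of these `t`, so a DDT entry of `g`
is at most a sum of `p` DDT entries of `f`. For the inverse function, apart from `x = 0` and
`x = -a`, each of these equations is a quadratic equation in `x`, with at most two roots.
-/

open Finset

/-- The `c`-DDT entry of `f` at `(a, b)`:
the number of `x` with `f (x + a) - c * f x = b`. -/
def cDDT {F : Type*} [Field F] [Fintype F] [DecidableEq F]
    (f : F → F) (c a b : F) : ℕ :=
  (Finset.univ.filter (fun x : F => f (x + a) - c * f x = b)).card

/-- The `c`-differential uniformity of `f`: the maximum of the `c`-DDT entries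
over all `a, b`, where `a ≠ 0` is required when `c = 1`. -/
def cDU {F : Type*} [Field F] [Fintype F] [DecidableEq F]
    (f : F → F) (c : F) : ℕ :=
  (Finset.univ.filter (fun ab : F × F => c = 1 → ab.1 ≠ 0)).sup
    (fun ab => cDDT f c ab.1 ab.2)

/-- The classical differential uniformity of `f`. -/
def DU {F : Type*} [Field F] [Fintype F] [DecidableEq F] (f : F → F) : ℕ :=
  cDU f 1

/-- The BCT entry of `f` at `(a, b)`: the number of pairs `(x, y)` with
`f x - f y = b` and `f (x + a) - f (y + a) = b`. -/
def BCT {F : Type*} [Field F] [Fintype F] [DecidableEq F]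
    (f : F → F) (a b : F) : ℕ :=
  (Finset.univ.filter (fun xy : F × F =>
    f xy.1 - f xy.2 = b ∧ f (xy.1 + a) - f (xy.2 + a) = b)).card

/-- The boomerang uniformity of `f`: the maximum of the BCT entries over all
nonzero `a, b`. -/
def BU {F : Type*} [Field F] [Fintype F] [DecidableEq F] (f : F → F) : ℕ :=
  (Finset.univ.filter (fun ab : F × F => ab.1 ≠ 0 ∧ ab.2 ≠ 0)).sup
    (fun ab => BCT f ab.1 ab.2)

/-- The quadratic character: `χ 0 = 0`, `χ α = 1` if `α` is a nonzero square,
and `χ α = -1` otherwise. -/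
noncomputable def chi {F : Type*} [Field F] (α : F) : ℤ :=
  letI := Classical.dec (α = 0)
  letI := Classical.dec (IsSquare α)
  if α = 0 then 0 else if IsSquare α then 1 else -1

/-- The `c`-differential spectrum entry `ω_i` of a power function:
the number of `b` with `cΔ_f(1, b) = i`. -/
def omegaSpec {F : Type*} [Field F] [Fintype F] [DecidableEq F]
    (f : F → F) (c : F) (i : ℕ) : ℕ :=
  (Finset.univ.filter (fun b : F => cDDT f c 1 b = i)).card

/-- The boomerang spectrum entry `v_i` of a power function:
the number of nonzero `b` with `B_f(1, b) = i`. -/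
def vSpec {F : Type*} [Field F] [Fintype F] [DecidableEq F]
    (f : F → F) (i : ℕ) : ℕ :=
  (Finset.univ.filter (fun b : F => b ≠ 0 ∧ BCT f 1 b = i)).card

open Polynomial

theorem sum_range_pow_pow_char_eq_self {R : Type*} [CommRing R] {p : ℕ} [ExpChar R p] (n : ℕ)
    {y : R} (hy : y ^ p ^ n = y) : (∑ i ∈ range n, y ^ p ^ i) ^ p = ∑ i ∈ range n, y ^ p ^ i := by
  have hshift := (sum_range_succ' (fun i => y ^ p ^ i) n).symm.trans
    (sum_range_succ (fun i => y ^ p ^ i) n)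
  rw [pow_zero, pow_one, hy] at hshift
  simpa only [sum_pow_char, ← pow_mul, ← pow_succ] using add_right_cancel hshift

theorem card_filter_pow_eq_self_le {K : Type*} [Field K] [Fintype K] [DecidableEq K] {p : ℕ}
    (hp : 1 < p) : #{t : K | t ^ p = t} ≤ p := by
  refine (card_le_degree_of_subset_roots fun t ht => ?_).trans_eq
    (FiniteField.X_pow_card_sub_X_natDegree_eq K hp)
  rw [mem_roots (FiniteField.X_pow_card_sub_X_ne_zero K hp)]
  simpa [sub_eq_zero] using (mem_filter.mp ht).2

theorem FiniteField.pow_card_sub_two_eq_inv {K : Type*} [Field K] [Fintype K] {x : K}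
    (hx : x ≠ 0) : x ^ (Fintype.card K - 2) = x⁻¹ := by
  have hq : 2 ≤ Fintype.card K := Fintype.one_lt_card
  refine eq_inv_of_mul_eq_one_left ?_
  rw [← pow_succ, show Fintype.card K - 2 + 1 = Fintype.card K - 1 by omega,
    FiniteField.pow_card_sub_one_eq_one x hx]

theorem card_filter_inv_sub_inv_eq_le_two {K : Type*} [Field K] [Fintype K] [DecidableEq K]
    {a : K} (ha : a ≠ 0) (c : K) :
    #{x : K | x ≠ 0 ∧ x + a ≠ 0 ∧ (x + a)⁻¹ - x⁻¹ = c} ≤ 2 := by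
  -- `(x + a)⁻¹ - x⁻¹ = c` becomes `c x ^ 2 + c a x + a = 0` after clearing denominators.
  set P : K[X] := C c * X ^ 2 + C (c * a) * X + C a
  have hP : P ≠ 0 := fun h0 => ha (by simpa [P] using congrArg (coeff · 0) h0)
  have hdeg : P.natDegree ≤ 2 := by simp only [P]; compute_degree
  refine (card_le_degree_of_subset_roots fun x hx => ?_).trans hdeg
  obtain ⟨hx0, hxa, hxc⟩ := (mem_filter.mp hx).2
  rw [mem_roots hP, IsRoot]
  simp only [P, eval_add, eval_mul, eval_C, eval_X, eval_pow]
  rw [← hxc]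
  field_simp
  ring

section Switching

variable {F : Type*} [Field F] [DecidableEq F] {f g φ : F → F} {α a : F} {S : Finset F}

theorem card_filter_switch_le (hg : ∀ x, g x = f x + α * φ x)
    (hS : ∀ x, φ (x + a) - φ x ∈ S) (U : Finset F) (b : F) :
    #{x ∈ U | g (x + a) - g x = b} ≤ ∑ t ∈ S, #{x ∈ U | f (x + a) - f x = b - α * t} := by
  refine (card_le_card fun x hx => ?_).trans card_biUnion_le
  obtain ⟨hxU, hxb⟩ := mem_filter.mp hx
  refine mem_biUnion.mpr ⟨φ (x + a) - φ x, hS x, mem_filter.mpr ⟨hxU, ?_⟩⟩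
  rw [hg, hg] at hxb
  linear_combination hxb

variable [Fintype F]

theorem cDDT_one (f : F → F) (a b : F) : cDDT f 1 a b = #{x | f (x + a) - f x = b} := by
  simp only [cDDT, one_mul]

theorem cDDT_one_le_DU (f : F → F) {a : F} (ha : a ≠ 0) (b : F) : cDDT f 1 a b ≤ DU f := by
  unfold DU cDU
  exact le_sup (f := fun ab : F × F => cDDT f 1 ab.1 ab.2)
    (mem_filter.mpr ⟨mem_univ (a, b), fun _ => ha⟩)

theorem DU_le_of_forall_cDDT_le {m : ℕ} (hf : ∀ a b, a ≠ 0 → cDDT f 1 a b ≤ m) : DU f ≤ m := by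
  unfold DU cDU
  exact Finset.sup_le fun ab hab => hf ab.1 ab.2 ((mem_filter.mp hab).2 rfl)

theorem cDDT_switch_le_sum (hg : ∀ x, g x = f x + α * φ x)
    (hS : ∀ x, φ (x + a) - φ x ∈ S) (b : F) :
    cDDT g 1 a b ≤ ∑ t ∈ S, cDDT f 1 a (b - α * t) := by
  simpa only [cDDT_one] using card_filter_switch_le hg hS univ b

theorem cDDT_switch_inv_le (hf : ∀ x, x ≠ 0 → f x = x⁻¹) (hg : ∀ x, g x = f x + α * φ x)
    (hS : ∀ x, φ (x + a) - φ x ∈ S) (ha : a ≠ 0) (b : F) :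
    cDDT g 1 a b ≤ 2 * (#S + 1) := by
  set U : Finset F := {x | x ≠ 0 ∧ x + a ≠ 0}
  have hsplit : #{x | g (x + a) - g x = b} ≤ #{0, -a} + #{x ∈ U | g (x + a) - g x = b} := by
    refine (card_le_card fun x hx => ?_).trans (card_union_le _ _)
    by_cases hxU : x ∈ U
    · exact mem_union_right _ (mem_filter.mpr ⟨hxU, (mem_filter.mp hx).2⟩)
    · refine mem_union_left _ ?_
      simp only [U, mem_filter, mem_univ, true_and, not_and_or, not_not] at hxU
      rcases hxU with hx0 | hxa
      · simp [hx0]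
      · simp [eq_neg_of_add_eq_zero_left hxa]
  have hquad : ∀ c, #{x ∈ U | f (x + a) - f x = c} ≤ 2 := fun c => by
    refine le_of_eq_of_le ?_ (card_filter_inv_sub_inv_eq_le_two ha c)
    simp only [U, filter_filter, and_assoc]
    refine congrArg card (filter_congr fun x _ => ?_)
    exact and_congr_right fun hx0 => and_congr_right fun hxa => by rw [hf _ hx0, hf _ hxa]
  calc cDDT g 1 a b ≤ #{0, -a} + #{x ∈ U | g (x + a) - g x = b} := by rw [cDDT_one]; exact hsplit
    _ ≤ 2 + ∑ t ∈ S, #{x ∈ U | f (x + a) - f x = b - α * t} :=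
        add_le_add card_le_two (card_filter_switch_le hg hS U b)
    _ ≤ 2 + ∑ _t ∈ S, 2 := by gcongr with t; exact hquad _
    _ = 2 * (#S + 1) := by rw [sum_const, smul_eq_mul]; ring

end Switching

theorem du_switched_general (p n : ℕ) (hp : p.Prime)
    {F : Type*} [Field F] [Fintype F] [DecidableEq F]
    (hF : Fintype.card F = p ^ n)
    (f h : F → F) (α : F)
    (Tr : F → F) (hTr : ∀ x : F, Tr x = ∑ i ∈ Finset.range n, x ^ (p ^ i))
    (g : F → F) (hg : ∀ x : F, g x = f x + α * Tr (h x)) :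
    DU g ≤ p * DU f ∧
    ((∀ x : F, f x = x ^ (p ^ n - 2)) → DU g ≤ 2 * (p + 1)) := by
  have := Fact.mk hp
  have : CharP F p := charP_of_card_eq_prime_pow hF
  set T : Finset F := {t | t ^ p = t}
  have hTr_fixed (y : F) : Tr y ^ p = Tr y := by
    rw [hTr]
    exact sum_range_pow_pow_char_eq_self n (hF ▸ FiniteField.pow_card y)
  have hTr_sub (a x : F) : Tr (h (x + a)) - Tr (h x) ∈ T := by
    simp [T, sub_pow_char, hTr_fixed]
  have hT : #T ≤ p := card_filter_pow_eq_self_le hp.one_lt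
  refine ⟨DU_le_of_forall_cDDT_le fun a b ha => ?_,
    fun hf => DU_le_of_forall_cDDT_le fun a b ha => ?_⟩
  · calc cDDT g 1 a b ≤ ∑ t ∈ T, cDDT f 1 a (b - α * t) := cDDT_switch_le_sum hg (hTr_sub a) b
      _ ≤ ∑ _t ∈ T, DU f := sum_le_sum fun t _ => cDDT_one_le_DU f ha _
      _ = #T * DU f := by rw [sum_const, smul_eq_mul]
      _ ≤ p * DU f := by gcongr
  · have hinv (x : F) (hx : x ≠ 0) : f x = x⁻¹ := by
      rw [hf, ← hF, FiniteField.pow_card_sub_two_eq_inv hx]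
    calc cDDT g 1 a b ≤ 2 * (#T + 1) := cDDT_switch_inv_le hinv hg (hTr_sub a) ha b
      _ ≤ 2 * (p + 1) := by gcongr

theorem du_switched (p n : ℕ) (hp : p.Prime) (hpodd : Odd p) (hn : 1 ≤ n)
    {F : Type*} [Field F] [Fintype F] [DecidableEq F]
    (hF : Fintype.card F = p ^ n)
    (f h : F → F) (α : F)
    (Tr : F → F) (hTr : ∀ x : F, Tr x = ∑ i ∈ Finset.range n, x ^ (p ^ i))
    (g : F → F) (hg : ∀ x : F, g x = f x + α * Tr (h x)) :
    DU g ≤ p * DU f ∧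
    ((∀ x : F, f x = x ^ (p ^ n - 2)) → DU g ≤ 2 * (p + 1)) :=
  du_switched_general p n hp hF f h α Tr hTr g hg
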